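/- arXiv:1104.2702 — 4 statements merged into one kernel-verified Lean document; each statement's English description precedes it below -/
import Mathlib

section
/- In the uniform random model with s ≥ n colors, for a fixed perfect matching N and a fixed perfect matching M with |M ∩ N| = t, the conditional probability that N is rainbow given that M is rainbow is at least ∏_{i=t}^{n-1} (1 − i/s). -/
open Finset Function

open scoped Classical in
noncomputable def auxEquiv {α β γ : Type*} (e : α ↪ β) :
    (β → γ) ≃ (α → γ) × ({b : β // b ∉ Set.range e} → γ) where
  toFun f := (f ∘ e, fun b => f b.1)
  invFun p := fun b => if hb : b ∈ Set.range e then p.1 hb.choose else p.2 ⟨b, hb⟩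
  left_inv f := by
    funext b
    show (if hb : b ∈ Set.range e then f (e hb.choose) else f b) = f b
    by_cases hb : b ∈ Set.range e
    · rw [dif_pos hb]
      exact congrArg f hb.choose_spec
    · rw [dif_neg hb]
  right_inv p := by
    refine Prod.ext ?_ ?_
    · funext a
      have hb : e a ∈ Set.range e := ⟨a, rfl⟩
      show (if hb : e a ∈ Set.range e then p.1 hb.choose else p.2 ⟨e a, hb⟩) = p.1 a
      rw [dif_pos hb]
      exact congrArg p.1 (e.injective hb.choose_spec)
    · funext b
      show (if hb : b.1 ∈ Set.range e then p.1 hb.choose else p.2 ⟨b.1, hb⟩) = p.2 b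
      rw [dif_neg b.2]

lemma aux_card_prod {A B : Type*} [Fintype A] [Fintype B] (P : A → Prop) (Q : A → B → Prop)
    (D : ℕ) (hQ : ∀ a, P a → Nat.card {b // Q a b} = D) :
    Nat.card {x : A × B // P x.1 ∧ Q x.1 x.2} = Nat.card {a // P a} * D := by
  classical
  simp only [Nat.card_eq_fintype_card] at hQ ⊢
  rw [Fintype.card_congr (Equiv.subtypeProdEquivSigmaSubtype (fun a b => P a ∧ Q a b)),
    Fintype.card_sigma]
  have h1 : ∀ a : A, Fintype.card {b // P a ∧ Q a b} = if P a then D else 0 := by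
    intro a
    by_cases h : P a
    · rw [if_pos h, ← hQ a h]
      exact Fintype.card_congr (Equiv.subtypeEquivRight fun b => and_iff_right h)
    · rw [if_neg h, Fintype.card_eq_zero_iff]
      exact ⟨fun x => absurd x.2.1 h⟩
  simp only [h1]
  rw [Finset.sum_ite, Finset.sum_const, Finset.sum_const, smul_eq_mul, smul_eq_mul, mul_zero,
    add_zero, Fintype.card_subtype]

lemma aux_card_inj {α γ : Type*} [Fintype α] [Fintype γ] :
    Nat.card {g : α → γ // Function.Injective g} =
      (Nat.card γ).descFactorial (Nat.card α) := by
  classical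
  simp only [Nat.card_eq_fintype_card]
  rw [Fintype.card_congr (Equiv.subtypeInjectiveEquivEmbedding α γ), Fintype.card_embedding_eq]

lemma aux_card_comp {α β γ : Type*} [Fintype α] [Fintype β] [Fintype γ]
    (e : α ↪ β) (P : (α → γ) → Prop) :
    Nat.card {f : β → γ // P (f ∘ e)} =
      Nat.card {g : α → γ // P g} * Nat.card γ ^ (Nat.card β - Nat.card α) := by
  classical
  have h1 : Nat.card {f : β → γ // P (f ∘ e)}
      = Nat.card {x : (α → γ) × ({b : β // b ∉ Set.range e} → γ) //
          P x.1 ∧ (fun (_ : α → γ) (_ : {b : β // b ∉ Set.range e} → γ) => True) x.1 x.2} :=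
    Nat.card_congr (Equiv.subtypeEquiv (auxEquiv e) fun f => (and_iff_left trivial).symm)
  have hD : Nat.card ({b : β // b ∉ Set.range e} → γ)
      = Nat.card γ ^ (Nat.card β - Nat.card α) := by
    simp only [Nat.card_eq_fintype_card]
    rw [Fintype.card_fun]
    congr 1
    rw [Fintype.card_subtype_compl]
    congr 1
    exact Fintype.card_congr (Equiv.ofInjective e e.injective).symm
  have hQ : ∀ a : α → γ, P a →
      Nat.card {b : {b : β // b ∉ Set.range e} → γ //
        (fun (_ : α → γ) (_ : {b : β // b ∉ Set.range e} → γ) => True) a b}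
      = Nat.card γ ^ (Nat.card β - Nat.card α) := fun a _ =>
    (Nat.card_congr (Equiv.subtypeUnivEquiv fun _ => trivial)).trans hD
  rw [h1, aux_card_prod P (fun _ _ => True) _ hQ]

lemma aux_ext {n s : ℕ} (σ τ : Equiv.Perm (Fin n)) {a : Fin n → Fin s}
    (ha : Function.Injective a) (t : ℕ)
    (ht : (Finset.univ.filter (fun i : Fin n => σ i = τ i)).card = t) :
    Nat.card {b : {i : Fin n // ¬ σ i = τ i} → Fin s //
      Function.Injective (fun i : Fin n => if h : σ i = τ i then a i else b ⟨i, h⟩)}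
    = (s - t).descFactorial (n - t) := by
  classical
  set T : Finset (Fin s) := (Finset.univ.filter (fun i : Fin n => σ i = τ i)).image a with hTdef
  have hT : T.card = t := by
    rw [hTdef, Finset.card_image_of_injective _ ha]
    convert ht using 2
  have hmem : ∀ (b : {b : {i : Fin n // ¬ σ i = τ i} → Fin s //
      Function.Injective (fun i : Fin n => if h : σ i = τ i then a i else b ⟨i, h⟩)})
      (j : {i : Fin n // ¬ σ i = τ i}), b.1 j ∉ T := by
    rintro ⟨b, hb⟩ j hmemT
    obtain ⟨i, hiF, hai⟩ := Finset.mem_image.mp hmemT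
    have hi : σ i = τ i := (Finset.mem_filter.mp hiF).2
    have h1 : (if h : σ i = τ i then a i else b ⟨i, h⟩)
        = (if h : σ j.1 = τ j.1 then a j.1 else b ⟨j.1, h⟩) := by
      rw [dif_pos hi, dif_neg j.2]
      exact hai
    have h2 : i = j.1 := hb h1
    exact j.2 (h2 ▸ hi)
  have hinj1 : ∀ (b : {b : {i : Fin n // ¬ σ i = τ i} → Fin s //
      Function.Injective (fun i : Fin n => if h : σ i = τ i then a i else b ⟨i, h⟩)}),
      Function.Injective (fun j => (⟨b.1 j, hmem b j⟩ : {c : Fin s // c ∉ T})) := by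
    rintro ⟨b, hb⟩ j j' h
    have hval : b j = b j' := congrArg Subtype.val h
    have h1 : (if h : σ j.1 = τ j.1 then a j.1 else b ⟨j.1, h⟩)
        = (if h : σ j'.1 = τ j'.1 then a j'.1 else b ⟨j'.1, h⟩) := by
      rw [dif_neg j.2, dif_neg j'.2]
      exact hval
    exact Subtype.ext (hb h1)
  have hinv : ∀ (b' : {b' : {i : Fin n // ¬ σ i = τ i} → {c : Fin s // c ∉ T} //
      Function.Injective b'}),
      Function.Injective (fun i : Fin n => if h : σ i = τ i then a i else (b'.1 ⟨i, h⟩).1) := by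
    rintro ⟨b', hb'⟩ i i' h
    simp only at h
    by_cases hi : σ i = τ i <;> by_cases hi' : σ i' = τ i'
    · rw [dif_pos hi, dif_pos hi'] at h
      exact ha h
    · rw [dif_pos hi, dif_neg hi'] at h
      have hmemT : a i ∈ T := Finset.mem_image.mpr ⟨i, Finset.mem_filter.mpr ⟨Finset.mem_univ i, hi⟩, rfl⟩
      rw [h] at hmemT
      exact absurd hmemT (b' ⟨i', hi'⟩).2
    · rw [dif_neg hi, dif_pos hi'] at h
      have hmemT : a i' ∈ T := Finset.mem_image.mpr ⟨i', Finset.mem_filter.mpr ⟨Finset.mem_univ i', hi'⟩, rfl⟩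
      rw [← h] at hmemT
      exact absurd hmemT (b' ⟨i, hi⟩).2
    · rw [dif_neg hi, dif_neg hi'] at h
      exact congrArg Subtype.val (hb' (Subtype.ext h))
  have hE : Nat.card {b : {i : Fin n // ¬ σ i = τ i} → Fin s //
      Function.Injective (fun i : Fin n => if h : σ i = τ i then a i else b ⟨i, h⟩)}
      = Nat.card {b' : {i : Fin n // ¬ σ i = τ i} → {c : Fin s // c ∉ T} //
        Function.Injective b'} := by
    refine Nat.card_congr
      { toFun := fun b => ⟨fun j => ⟨b.1 j, hmem b j⟩, hinj1 b⟩
        invFun := fun b' => ⟨fun i => (b'.1 i).1, hinv b'⟩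
        left_inv := fun b => rfl
        right_inv := fun b' => rfl }
  rw [hE, aux_card_inj]
  have hc1 : Nat.card {c : Fin s // c ∉ T} = s - t := by
    rw [Nat.card_eq_fintype_card, Fintype.card_subtype_compl]
    congr 1
    · exact Fintype.card_fin s
    · rw [← hT]
      exact Fintype.card_coe T
  have hc2 : Nat.card {i : Fin n // ¬ σ i = τ i} = n - t := by
    rw [Nat.card_eq_fintype_card, Fintype.card_subtype_compl, Fintype.card_fin]
    congr 1
    rw [← ht, Fintype.card_subtype]
  rw [hc1, hc2]

/-- Uniform random model with `s ≥ n` colors: if perfect matchings `M, N` of `K_{n,n}`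
(permutations `σ, τ`) share exactly `t` edges, then the conditional probability that `N`
is rainbow given that `M` is rainbow is at least `∏_{i=t}^{n-1} (1 − i/s)`. -/
theorem stmt_12 (n s t : ℕ) (hs : n ≤ s) (σ τ : Equiv.Perm (Fin n))
    (ht : (Finset.univ.filter (fun i : Fin n => σ i = τ i)).card = t) :
    ((Finset.univ.filter
        (fun f : Fin n × Fin n → Fin s =>
          (Function.Injective fun i => f (i, σ i)) ∧
          (Function.Injective fun i => f (i, τ i)))).card : ℝ)
      / ((Finset.univ.filter
        (fun f : Fin n × Fin n → Fin s =>
          Function.Injective fun i => f (i, σ i))).card : ℝ)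
      ≥ ∏ i ∈ Finset.Ico t n, (1 - (i : ℝ) / (s : ℝ)) := by
  classical
  have htn : t ≤ n := by
    rw [← ht]
    simpa using Finset.card_filter_le Finset.univ (fun i : Fin n => σ i = τ i)
  let eM : Fin n ↪ Fin n × Fin n := ⟨fun i => (i, σ i), fun i j h => congrArg Prod.fst h⟩
  have hScard : Fintype.card {i : Fin n // ¬ σ i = τ i} = n - t := by
    rw [Fintype.card_subtype_compl, Fintype.card_fin]
    congr 1
    rw [← ht, Fintype.card_subtype]
  let eN : (Fin n ⊕ {i : Fin n // ¬ σ i = τ i}) ↪ Fin n × Fin n :=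
    ⟨Sum.elim (fun i => (i, σ i)) (fun j => (j.1, τ j.1)), by
      rintro (i | j) (i' | j') h
      · exact congrArg Sum.inl (congrArg Prod.fst h)
      · have h1 : i = j'.1 := congrArg Prod.fst h
        have h2 : σ i = τ j'.1 := congrArg Prod.snd h
        rw [h1] at h2
        exact absurd h2 j'.2
      · have h1 : j.1 = i' := congrArg Prod.fst h
        have h2 : τ j.1 = σ i' := congrArg Prod.snd h
        rw [← h1] at h2
        exact absurd h2.symm j.2
      · exact congrArg Sum.inr (Subtype.ext (congrArg Prod.fst h))⟩
  have hle2 : n + (n - t) ≤ n * n := by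
    have h := Fintype.card_le_of_embedding eN
    rwa [Fintype.card_sum, Fintype.card_fin, hScard, Fintype.card_prod, Fintype.card_fin] at h
  -- the denominator count
  have hden : (Finset.univ.filter
      (fun f : Fin n × Fin n → Fin s =>
        Function.Injective fun i => f (i, σ i))).card
      = s.descFactorial n * s ^ (n * n - n) := by
    calc (Finset.univ.filter
        (fun f : Fin n × Fin n → Fin s =>
          Function.Injective fun i => f (i, σ i))).card
        = Nat.card {f : Fin n × Fin n → Fin s //
            Function.Injective fun i => f (i, σ i)} := by
          rw [Nat.card_eq_fintype_card, Fintype.card_subtype]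
      _ = Nat.card {g : Fin n → Fin s // Function.Injective g}
            * Nat.card (Fin s) ^ (Nat.card (Fin n × Fin n) - Nat.card (Fin n)) :=
          aux_card_comp eM Function.Injective
      _ = s.descFactorial n * s ^ (n * n - n) := by
          rw [aux_card_inj]
          simp only [Nat.card_eq_fintype_card, Fintype.card_fin, Fintype.card_prod]
  -- the numerator count
  have hnum : (Finset.univ.filter
      (fun f : Fin n × Fin n → Fin s =>
        (Function.Injective fun i => f (i, σ i)) ∧
        (Function.Injective fun i => f (i, τ i)))).card
      = s.descFactorial n * (s - t).descFactorial (n - t) * s ^ (n * n - (n + (n - t))) := by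
    have h1 : ∀ f : Fin n × Fin n → Fin s,
        ((Function.Injective fun i => f (i, σ i)) ∧
          (Function.Injective fun i => f (i, τ i)))
        ↔ ((Function.Injective fun i : Fin n => (f ∘ eN) (Sum.inl i)) ∧
            (Function.Injective fun i : Fin n =>
              if h : σ i = τ i then (f ∘ eN) (Sum.inl i) else (f ∘ eN) (Sum.inr ⟨i, h⟩))) := by
      intro f
      have h2 : (fun i : Fin n => f (i, τ i))
          = (fun i : Fin n => if h : σ i = τ i then (f ∘ eN) (Sum.inl i)
              else (f ∘ eN) (Sum.inr ⟨i, h⟩)) := by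
        funext i
        by_cases h : σ i = τ i
        · rw [dif_pos h]
          show f (i, τ i) = f (i, σ i)
          rw [h]
        · rw [dif_neg h]
          rfl
      constructor
      · rintro ⟨ha, hb⟩
        exact ⟨ha, by rw [← h2]; exact hb⟩
      · rintro ⟨ha, hb⟩
        refine ⟨ha, ?_⟩
        rw [h2]
        exact hb
    calc (Finset.univ.filter
        (fun f : Fin n × Fin n → Fin s =>
          (Function.Injective fun i => f (i, σ i)) ∧
          (Function.Injective fun i => f (i, τ i)))).card
        = Nat.card {f : Fin n × Fin n → Fin s //
            (Function.Injective fun i => f (i, σ i)) ∧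
            (Function.Injective fun i => f (i, τ i))} := by
          rw [Nat.card_eq_fintype_card, Fintype.card_subtype]
      _ = Nat.card {f : Fin n × Fin n → Fin s //
            (fun g : (Fin n ⊕ {i : Fin n // ¬ σ i = τ i}) → Fin s =>
              (Function.Injective fun i : Fin n => g (Sum.inl i)) ∧
              (Function.Injective fun i : Fin n =>
                if h : σ i = τ i then g (Sum.inl i) else g (Sum.inr ⟨i, h⟩))) (f ∘ eN)} :=
          Nat.card_congr (Equiv.subtypeEquivRight fun f => (h1 f).trans Iff.rfl)
      _ = Nat.card {g : (Fin n ⊕ {i : Fin n // ¬ σ i = τ i}) → Fin s //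
            (fun g : (Fin n ⊕ {i : Fin n // ¬ σ i = τ i}) → Fin s =>
              (Function.Injective fun i : Fin n => g (Sum.inl i)) ∧
              (Function.Injective fun i : Fin n =>
                if h : σ i = τ i then g (Sum.inl i) else g (Sum.inr ⟨i, h⟩))) g}
            * Nat.card (Fin s) ^ (Nat.card (Fin n × Fin n)
                - Nat.card (Fin n ⊕ {i : Fin n // ¬ σ i = τ i})) :=
          aux_card_comp eN (fun g : (Fin n ⊕ {i : Fin n // ¬ σ i = τ i}) → Fin s =>
            (Function.Injective fun i : Fin n => g (Sum.inl i)) ∧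
            (Function.Injective fun i : Fin n =>
              if h : σ i = τ i then g (Sum.inl i) else g (Sum.inr ⟨i, h⟩)))
      _ = Nat.card {x : (Fin n → Fin s) × ({i : Fin n // ¬ σ i = τ i} → Fin s) //
            Function.Injective x.1 ∧
            (fun (a : Fin n → Fin s) (b : {i : Fin n // ¬ σ i = τ i} → Fin s) =>
              Function.Injective fun i : Fin n =>
                if h : σ i = τ i then a i else b ⟨i, h⟩) x.1 x.2}
            * Nat.card (Fin s) ^ (Nat.card (Fin n × Fin n)
                - Nat.card (Fin n ⊕ {i : Fin n // ¬ σ i = τ i})) := by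
          congr 1
          exact Nat.card_congr
            (Equiv.subtypeEquiv (Equiv.sumArrowEquivProdArrow _ _ _) fun g => Iff.rfl)
      _ = (Nat.card {a : Fin n → Fin s // Function.Injective a}
            * (s - t).descFactorial (n - t))
            * Nat.card (Fin s) ^ (Nat.card (Fin n × Fin n)
                - Nat.card (Fin n ⊕ {i : Fin n // ¬ σ i = τ i})) := by
          congr 1
          exact aux_card_prod Function.Injective _ ((s - t).descFactorial (n - t))
            (fun a ha => aux_ext σ τ ha t ht)
      _ = s.descFactorial n * (s - t).descFactorial (n - t)
            * s ^ (n * n - (n + (n - t))) := by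
          rw [aux_card_inj]
          simp only [Nat.card_eq_fintype_card, Fintype.card_fin, Fintype.card_prod,
            Fintype.card_sum, hScard]
  clear eM eN
  -- arithmetic
  have hA0 : (s.descFactorial n : ℝ) ≠ 0 := by
    refine Nat.cast_ne_zero.mpr fun h => ?_
    exact absurd (Nat.descFactorial_eq_zero_iff_lt.mp h) (not_lt.mpr hs)
  have hse : (s : ℝ) ^ (n * n - (n + (n - t))) ≠ 0 := by
    rcases Nat.eq_zero_or_pos n with hn | hn
    · subst hn
      norm_num
    · exact pow_ne_zero _ (Nat.cast_ne_zero.mpr (lt_of_lt_of_le hn hs).ne')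
  have hsnt : (s : ℝ) ^ (n - t) ≠ 0 := by
    rcases eq_or_lt_of_le htn with h | h
    · rw [h, Nat.sub_self, pow_zero]
      exact one_ne_zero
    · exact pow_ne_zero _ (Nat.cast_ne_zero.mpr
        (lt_of_le_of_lt (Nat.zero_le t) (lt_of_lt_of_le h hs)).ne')
  have hprod : ∏ i ∈ Finset.Ico t n, (1 - (i : ℝ) / (s : ℝ))
      = ((s - t).descFactorial (n - t) : ℝ) / (s : ℝ) ^ (n - t) := by
    rcases eq_or_lt_of_le htn with h | h
    · subst h
      simp
    · have hs0 : 0 < s := lt_of_le_of_lt (Nat.zero_le t) (lt_of_lt_of_le h hs)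
      have hs0' : (s : ℝ) ≠ 0 := Nat.cast_ne_zero.mpr hs0.ne'
      have hstep : ∀ i ∈ Finset.Ico t n, (1 - (i : ℝ) / s) = ((s - i : ℕ) : ℝ) / s := by
        intro i hi
        have hi' : i < s := lt_of_lt_of_le (Finset.mem_Ico.mp hi).2 hs
        rw [Nat.cast_sub hi'.le, sub_div, div_self hs0']
      rw [Finset.prod_congr rfl hstep, Finset.prod_div_distrib, Finset.prod_const, Nat.card_Ico]
      congr 1
      rw [← Nat.cast_prod]
      congr 1
      rw [Finset.prod_Ico_eq_prod_range, Nat.descFactorial_eq_prod_range]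
      refine Finset.prod_congr rfl fun i _ => ?_
      exact (Nat.sub_sub s t i).symm
  rw [ge_iff_le, hnum, hden, hprod]
  apply le_of_eq
  have hexp : n * n - n = (n * n - (n + (n - t))) + (n - t) := by
    clear * - hle2 htn
    generalize n * n = m at hle2 ⊢
    omega
  rw [hexp]
  push_cast
  rw [pow_add, div_eq_div_iff hsnt (mul_ne_zero hA0 (mul_ne_zero hse hsnt))]
  ring
end

section
/- In the uniform random model with s ≥ n colors on K_{n,n}, for any two perfect matchings M and N, the events {M is rainbow} and {N is rainbow} are positively correlated: P(M rainbow and N rainbow) ≥ P(M rainbow)·P(N rainbow). -/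
open Finset

section SplitCount

variable {α β γ : Type*}

noncomputable def splitEquiv [Fintype β] [DecidableEq α] (e : β ↪ α) :
    (α → γ) ≃ (β → γ) × (((Set.range e)ᶜ : Set α) → γ) :=
  (Equiv.arrowCongr (Equiv.Set.sumCompl (Set.range e)).symm (Equiv.refl γ)).trans
    ((Equiv.sumArrowEquivProdArrow _ _ γ).trans
      (Equiv.prodCongr (Equiv.arrowCongr (Equiv.ofInjective e e.injective).symm
        (Equiv.refl γ)) (Equiv.refl _)))

lemma splitEquiv_fst [Fintype β] [DecidableEq α] (e : β ↪ α) (f : α → γ) :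
    (splitEquiv e f).1 = f ∘ e := by
  funext b
  simp [splitEquiv, Equiv.sumArrowEquivProdArrow, Equiv.Set.sumCompl_apply_inl]

lemma count_comp [Fintype α] [Fintype β] [Fintype γ]
    [DecidableEq α] [DecidableEq β] [DecidableEq γ]
    (e : β ↪ α) (Q : (β → γ) → Prop) [DecidablePred Q] :
    (Finset.univ.filter (fun f : α → γ => Q (f ∘ e))).card
      = (Finset.univ.filter Q).card
        * (Fintype.card γ) ^ (Fintype.card α - Fintype.card β) := by
  classical
  rw [← Fintype.card_subtype, ← Fintype.card_subtype]
  have h1 : {f : α → γ // Q (f ∘ e)} ≃ {g : β → γ // Q g} × (((Set.range e)ᶜ : Set α) → γ) :=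
    ((Equiv.subtypeEquiv (splitEquiv e) (fun f => by rw [splitEquiv_fst])).trans
      Equiv.prodSubtypeFstEquivSubtypeProd)
  rw [Fintype.card_congr h1, Fintype.card_prod, Fintype.card_fun]
  congr 2
  rw [Fintype.card_compl_set, Fintype.card_range]

end SplitCount

lemma card_inj_subtype (n s : ℕ) :
    (Finset.univ.filter (fun g : Fin n → Fin s => Function.Injective g)).card
      = s.descFactorial n := by
  rw [← Fintype.card_subtype,
    Fintype.card_congr (Equiv.subtypeInjectiveEquivEmbedding (Fin n) (Fin s)),
    Fintype.card_embedding_eq, Fintype.card_fin, Fintype.card_fin]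

lemma count_inj (n s : ℕ) (σ : Equiv.Perm (Fin n)) :
    (Finset.univ.filter (fun f : Fin n × Fin n → Fin s =>
        Function.Injective fun i => f (i, σ i))).card
      = s.descFactorial n * s ^ (n * n - n) := by
  classical
  let e : Fin n ↪ Fin n × Fin n :=
    ⟨fun i => (i, σ i), fun a b h => congrArg Prod.fst h⟩
  have h := count_comp e (fun g : Fin n → Fin s => Function.Injective g)
  simp only [Fintype.card_prod, Fintype.card_fin] at h
  have he : (Finset.univ.filter (fun f : Fin n × Fin n → Fin s =>
      Function.Injective fun i => f (i, σ i)))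
      = (Finset.univ.filter (fun f : Fin n × Fin n → Fin s =>
        Function.Injective (f ∘ e))) := by
    apply Finset.filter_congr
    intro f _
    rfl
  rw [he, h, card_inj_subtype]

lemma card_both_core (n s : ℕ) (σ τ : Equiv.Perm (Fin n)) (g : Fin n ↪ Fin s) :
    Fintype.card {c : Fin s // ∀ i, σ i = τ i → g i ≠ c}
      = s - Fintype.card {i : Fin n // σ i = τ i} := by
  classical
  have h1 : ∀ c : Fin s, (∀ i, σ i = τ i → g i ≠ c) ↔
      ¬ (∃ i : {i : Fin n // σ i = τ i}, g i.1 = c) := by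
    intro c
    constructor
    · rintro h ⟨⟨i, hi⟩, hc⟩; exact h i hi hc
    · intro h i hi hc; exact h ⟨⟨i, hi⟩, hc⟩
  rw [Fintype.card_congr (Equiv.subtypeEquivRight h1), Fintype.card_subtype_compl]
  congr 1
  · exact Fintype.card_fin s
  · let emb : {i : Fin n // σ i = τ i} ↪ Fin s :=
      (Function.Embedding.subtype _).trans g
    have : ∀ c : Fin s, (∃ i : {i : Fin n // σ i = τ i}, g i.1 = c) ↔ c ∈ Set.range emb := by
      intro c
      constructor
      · rintro ⟨i, hi⟩; exact ⟨i, hi⟩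
      · rintro ⟨i, hi⟩; exact ⟨i, hi⟩
    rw [Fintype.card_congr (Equiv.subtypeEquivRight this)]
    exact Fintype.card_range emb

section BothEquiv

variable {n s : ℕ} (σ τ : Equiv.Perm (Fin n))

noncomputable def bothEquiv :
    {p : (Fin n ⊕ {i : Fin n // ¬ σ i = τ i}) → Fin s //
        (Function.Injective fun i => p (Sum.inl i)) ∧
        (Function.Injective fun i =>
          if h : σ i = τ i then p (Sum.inl i) else p (Sum.inr ⟨i, h⟩))}
      ≃ Σ g : Fin n ↪ Fin s,
          ({i : Fin n // ¬ σ i = τ i} ↪ {c : Fin s // ∀ i, σ i = τ i → g i ≠ c}) where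
  toFun := fun ⟨p, hp⟩ =>
    ⟨⟨fun i => p (Sum.inl i), hp.1⟩,
      ⟨fun j => ⟨p (Sum.inr j), by
        intro i hi hc
        have h1 : (if h : σ i = τ i then p (Sum.inl i) else p (Sum.inr ⟨i, h⟩))
            = (if h : σ j.1 = τ j.1 then p (Sum.inl j.1) else p (Sum.inr ⟨j.1, h⟩)) := by
          rw [dif_pos hi, dif_neg j.2]; exact hc
        have := hp.2 h1
        exact j.2 (this ▸ hi)⟩, by
        intro a b hab
        have hab' : p (Sum.inr a) = p (Sum.inr b) := congrArg Subtype.val hab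
        have h1 : (if h : σ a.1 = τ a.1 then p (Sum.inl a.1) else p (Sum.inr ⟨a.1, h⟩))
            = (if h : σ b.1 = τ b.1 then p (Sum.inl b.1) else p (Sum.inr ⟨b.1, h⟩)) := by
          rw [dif_neg a.2, dif_neg b.2]; exact hab'
        exact Subtype.ext (hp.2 h1)⟩⟩
  invFun := fun ⟨g, v⟩ =>
    ⟨Sum.elim g (fun j => (v j).1), by
      constructor
      · exact g.injective
      · intro a b hab
        simp only [Sum.elim_inl, Sum.elim_inr] at hab
        by_cases ha : σ a = τ a <;> by_cases hb : σ b = τ b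
        · rw [dif_pos ha, dif_pos hb] at hab; exact g.injective hab
        · rw [dif_pos ha, dif_neg hb] at hab
          exact absurd hab ((v ⟨b, hb⟩).2 a ha)
        · rw [dif_neg ha, dif_pos hb] at hab
          exact absurd hab.symm ((v ⟨a, ha⟩).2 b hb)
        · rw [dif_neg ha, dif_neg hb] at hab
          exact congrArg Subtype.val (v.injective (Subtype.ext hab))⟩
  left_inv := fun ⟨p, hp⟩ => by
    apply Subtype.ext
    funext x
    cases x <;> rfl
  right_inv := fun ⟨g, v⟩ => rfl

end BothEquiv

lemma aux_card_le (n s : ℕ) (σ τ : Equiv.Perm (Fin n)) :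
    n + (n - Fintype.card {i : Fin n // σ i = τ i}) ≤ n * n := by
  classical
  let e12 : (Fin n ⊕ {i : Fin n // ¬ σ i = τ i}) ↪ Fin n × Fin n :=
    ⟨Sum.elim (fun i => (i, σ i)) (fun j => (j.1, τ j.1)), by
      rintro (a | a) (b | b) h <;>
        simp only [Sum.elim_inl, Sum.elim_inr, Prod.mk.injEq] at h
      · exact congrArg Sum.inl h.1
      · exact absurd ((congrArg σ h.1).symm.trans h.2) b.2
      · exact absurd (h.2.trans (congrArg σ h.1.symm)).symm a.2
      · exact congrArg Sum.inr (Subtype.ext h.1)⟩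
  have h := Fintype.card_le_of_embedding e12
  simpa [Fintype.card_subtype_compl] using h

lemma count_both (n s : ℕ) (σ τ : Equiv.Perm (Fin n)) :
    (Finset.univ.filter (fun f : Fin n × Fin n → Fin s =>
        (Function.Injective fun i => f (i, σ i)) ∧
        (Function.Injective fun i => f (i, τ i)))).card
      = s.descFactorial n
        * (s - Fintype.card {i : Fin n // σ i = τ i}).descFactorial
            (n - Fintype.card {i : Fin n // σ i = τ i})
        * s ^ (n * n - (n + (n - Fintype.card {i : Fin n // σ i = τ i}))) := by
  classical
  set m := Fintype.card {i : Fin n // σ i = τ i} with hm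
  let e12 : (Fin n ⊕ {i : Fin n // ¬ σ i = τ i}) ↪ Fin n × Fin n :=
    ⟨Sum.elim (fun i => (i, σ i)) (fun j => (j.1, τ j.1)), by
      rintro (a | a) (b | b) h <;>
        simp only [Sum.elim_inl, Sum.elim_inr, Prod.mk.injEq] at h
      · exact congrArg Sum.inl h.1
      · exact absurd ((congrArg σ h.1).symm.trans h.2) b.2
      · exact absurd (h.2.trans (congrArg σ h.1.symm)).symm a.2
      · exact congrArg Sum.inr (Subtype.ext h.1)⟩
  have key := count_comp e12 (fun p : (Fin n ⊕ {i : Fin n // ¬ σ i = τ i}) → Fin s => (Function.Injective fun i => p (Sum.inl i)) ∧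
    (Function.Injective fun i =>
      if h : σ i = τ i then p (Sum.inl i) else p (Sum.inr ⟨i, h⟩)))
  have he : (Finset.univ.filter (fun f : Fin n × Fin n → Fin s =>
      (Function.Injective fun i => f (i, σ i)) ∧
      (Function.Injective fun i => f (i, τ i))))
      = (Finset.univ.filter (fun f : Fin n × Fin n → Fin s =>
        (Function.Injective fun i => (f ∘ e12) (Sum.inl i)) ∧
        (Function.Injective fun i =>
          if h : σ i = τ i then (f ∘ e12) (Sum.inl i) else (f ∘ e12) (Sum.inr ⟨i, h⟩)))) := by
    apply Finset.filter_congr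
    intro f _
    have h2 : (fun i => if h : σ i = τ i then (f ∘ e12) (Sum.inl i)
        else (f ∘ e12) (Sum.inr ⟨i, h⟩)) = (fun i => f (i, τ i)) := by
      funext i
      by_cases h : σ i = τ i
      · rw [dif_pos h]; show f (i, σ i) = f (i, τ i); rw [h]
      · rw [dif_neg h]; rfl
    rw [h2]
    exact Iff.rfl
  have hcard2 : Fintype.card {i : Fin n // ¬ σ i = τ i} = n - m := by
    rw [Fintype.card_subtype_compl, Fintype.card_fin]
  have hQ : (Finset.univ.filter (fun p : (Fin n ⊕ {i : Fin n // ¬ σ i = τ i}) → Fin s =>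
      (Function.Injective fun i => p (Sum.inl i)) ∧
      (Function.Injective fun i =>
        if h : σ i = τ i then p (Sum.inl i) else p (Sum.inr ⟨i, h⟩)))).card
      = s.descFactorial n * (s - m).descFactorial (n - m) := by
    rw [← Fintype.card_subtype, Fintype.card_congr (bothEquiv σ τ), Fintype.card_sigma]
    have hfib : ∀ g : Fin n ↪ Fin s,
        Fintype.card ({i : Fin n // ¬ σ i = τ i} ↪
          {c : Fin s // ∀ i, σ i = τ i → g i ≠ c}) = (s - m).descFactorial (n - m) := by
      intro g
      rw [Fintype.card_embedding_eq, card_both_core n s σ τ g, hcard2]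
    simp only [hfib]
    rw [Finset.sum_const, Finset.card_univ, Fintype.card_embedding_eq, Fintype.card_fin,
      Fintype.card_fin, smul_eq_mul]
  rw [he, key, hQ]
  congr 2
  all_goals simp [Fintype.card_prod, Fintype.card_sum, Fintype.card_fin, hcard2]

/-- Uniform random model with `s ≥ n` colors: for any two perfect matchings `M, N` of
`K_{n,n}` (permutations `σ, τ`), the events that they are rainbow are positively
correlated: `P(M and N rainbow) ≥ P(M rainbow)·P(N rainbow)`. -/
theorem stmt_13 (n s : ℕ) (hs : n ≤ s) (σ τ : Equiv.Perm (Fin n)) :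
    ((Finset.univ.filter
        (fun f : Fin n × Fin n → Fin s =>
          (Function.Injective fun i => f (i, σ i)) ∧
          (Function.Injective fun i => f (i, τ i)))).card : ℝ) / ((s : ℝ) ^ (n * n))
      ≥ (((Finset.univ.filter
          (fun f : Fin n × Fin n → Fin s =>
            Function.Injective fun i => f (i, σ i))).card : ℝ) / ((s : ℝ) ^ (n * n)))
        * (((Finset.univ.filter
          (fun f : Fin n × Fin n → Fin s =>
            Function.Injective fun i => f (i, τ i))).card : ℝ) / ((s : ℝ) ^ (n * n))) := by
  classical
  rw [count_inj n s σ, count_inj n s τ, count_both n s σ τ]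
  set m := Fintype.card {i : Fin n // σ i = τ i} with hm
  have hmn : m ≤ n := by
    have := Fintype.card_subtype_le (fun i : Fin n => σ i = τ i)
    simpa using this
  have hemb : n + (n - m) ≤ n * n := aux_card_le n s σ τ
  have hn2 : n ≤ n * n := by
    rcases Nat.eq_zero_or_pos n with h0 | h0
    · simp [h0]
    · exact Nat.le_mul_of_pos_left n h0
  have hP : (0 : ℝ) < (s : ℝ) ^ (n * n) := by
    rcases Nat.eq_zero_or_pos n with h0 | h0
    · simp [h0]
    · have hs0 : 0 < s := lt_of_lt_of_le h0 hs
      positivity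
  set a := s.descFactorial n with ha
  set c := (s - m).descFactorial (n - m) with hc
  set p := n * n - n with hp
  set q := n * n with hq
  set r := n * n - (n + (n - m)) with hr
  have natkey : a * s ^ p * (a * s ^ p) * s ^ q ≤ a * c * s ^ r * (s ^ q * s ^ q) := by
    have hds : c * s.descFactorial m = a := Nat.descFactorial_mul_descFactorial hmn
    have h1 : s.descFactorial m ≤ s ^ m := Nat.descFactorial_le_pow s m
    have e1 : a * s ^ p * (a * s ^ p) * s ^ q = a * a * s ^ (p + p + q) := by
      rw [pow_add, pow_add]; ring
    have e2 : a * c * s ^ r * (s ^ q * s ^ q) = a * (c * s ^ m) * s ^ (p + p + q) := by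
      have hexp : r + (q + q) = m + (p + p + q) := by
        simp only [hp, hq, hr]
        omega
      calc a * c * s ^ r * (s ^ q * s ^ q) = a * c * s ^ (r + (q + q)) := by
            rw [pow_add, pow_add]; ring
        _ = a * c * s ^ (m + (p + p + q)) := by rw [hexp]
        _ = a * (c * s ^ m) * s ^ (p + p + q) := by rw [pow_add]; ring
    rw [e1, e2]
    apply Nat.mul_le_mul_right
    calc a * a = a * (c * s.descFactorial m) := by rw [hds]
      _ ≤ a * (c * s ^ m) := Nat.mul_le_mul_left _ (Nat.mul_le_mul_left _ h1)
  rw [ge_iff_le, div_mul_div_comm, div_le_div_iff₀ (by positivity) hP]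
  exact_mod_cast natkey
end

section
/- Every square matrix of order n in which every symbol appears at most (n−1)/(4e) times has a Latin transversal, i.e., a set of n cells, one in each row and one in each column, containing pairwise distinct symbols. -/
/-!
Pick a permutation σ, one cell per row and column, and call two cells with equal symbols in
distinct rows and columns a conflict; σ gives a Latin transversal iff it covers no conflict.
Counting permutations instead of using probabilities, we run the lopsided local lemma on the
events "σ covers the conflict e". Knowing that σ avoids conflicts which share no row or column
with e = ((i, j), (i', j')) cannot favour e: composing with a permutation that moves only the
columns j, j', u, v maps those σ with σ i = j, σ i' = j' injectively to those with
σ i = u, σ i' = v, for each of the n(n - 1) choices of (u, v). A conflict meets the four lines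
of e in at most 4n(k - 1) other conflicts when each symbol occurs at most k times, and the
symmetric local lemma with p = 1 / (n(n - 1)) applies exactly when k ≤ (n - 1) / (4e).
-/

open Finset Real

lemma Real.exp_neg_one_le_one_sub_pow {x : ℝ} {d : ℕ} (hx : x < 1) (hdx : (d + 1) * x ≤ 1) :
    exp (-1) ≤ (1 - x) ^ d := by
  have h1x : 0 < 1 - x := by linarith
  have hexp : exp (-(x / (1 - x))) ≤ 1 - x := by
    rw [exp_neg, inv_le_comm₀ (exp_pos _) h1x]
    calc (1 - x)⁻¹ = x / (1 - x) + 1 := by field_simp; ring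
      _ ≤ _ := add_one_le_exp _
  calc exp (-1) ≤ exp (-(x / (1 - x))) ^ d := by
        rw [← exp_nat_mul]
        gcongr
        rw [mul_neg, neg_le_neg_iff, ← mul_div_assoc, div_le_one h1x]
        linarith
    _ ≤ (1 - x) ^ d := by gcongr

namespace LocalLemma

variable {Ω ι : Type*} [Fintype Ω] (E : ι → Ω → Prop) [∀ i, DecidablePred (E i)]

def avoiding (F : Finset ι) : Finset Ω := {ω | ∀ i ∈ F, ¬ E i ω}

variable {E}

lemma mem_avoiding {F : Finset ι} {ω : Ω} : ω ∈ avoiding E F ↔ ∀ i ∈ F, ¬ E i ω := by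
  simp [avoiding]

lemma avoiding_anti : Antitone (avoiding E) :=
  fun _ _ hFG _ hω => mem_avoiding.2 fun i hi => mem_avoiding.1 hω i (hFG hi)

@[simp]
lemma avoiding_empty : avoiding E ∅ = univ := by
  ext; simp [mem_avoiding]

variable [DecidableEq ι]

lemma avoiding_insert (i : ι) (F : Finset ι) :
    avoiding E (insert i F) = (avoiding E F).filter (¬ E i ·) := by
  ext ω
  simp only [mem_avoiding, mem_filter, forall_mem_insert]
  tauto

lemma one_sub_mul_card_avoiding_le {x : ℝ} {i : ι} {F : Finset ι}
    (h : (#((avoiding E F).filter (E i)) : ℝ) ≤ x * #(avoiding E F)) :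
    (1 - x) * #(avoiding E F) ≤ #(avoiding E (insert i F)) := by
  have hsplit : (#((avoiding E F).filter (E i)) : ℝ) + #((avoiding E F).filter (¬ E i ·)) =
      #(avoiding E F) := by
    exact_mod_cast card_filter_add_card_filter_not (E i)
  rw [avoiding_insert]
  linarith

lemma one_sub_pow_mul_card_avoiding_le {x : ℝ} (hx : x ≤ 1) {F G : Finset ι}
    (h : ∀ H ⊆ G, ∀ i ∈ G, i ∉ H →
      (#((avoiding E (F ∪ H)).filter (E i)) : ℝ) ≤ x * #(avoiding E (F ∪ H))) :
    (1 - x) ^ #G * #(avoiding E F) ≤ #(avoiding E (F ∪ G)) := by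
  induction G using Finset.induction_on with
  | empty => simp
  | insert i G hi ih =>
    have hG := ih fun H hH j hj => h H (hH.trans (subset_insert _ _)) j (mem_insert_of_mem hj)
    rw [card_insert_of_notMem hi, pow_succ', mul_assoc, union_insert]
    calc (1 - x) * ((1 - x) ^ #G * #(avoiding E F)) ≤ (1 - x) * #(avoiding E (F ∪ G)) := by
          gcongr
      _ ≤ _ := one_sub_mul_card_avoiding_le (h G (subset_insert _ _) i (mem_insert_self _ _) hi)

variable {N : ι → ι → Prop} [DecidableRel N] {U : Finset ι} {p x : ℝ} {d : ℕ}

/-- The neighbours of `i` in `F` are removed one by one, each costing a factor `1 - x` by the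
induction hypothesis; on the remaining events the lopsided bound `p` applies. -/
lemma card_avoiding_filter_le_of_ssubset (hx0 : 0 ≤ x) (hx1 : x ≤ 1)
    (hpx : p ≤ x * (1 - x) ^ d) (hdeg : ∀ i ∈ U, #(U.filter (N i)) ≤ d)
    (hlop : ∀ i ∈ U, ∀ F ⊆ U, (∀ j ∈ F, ¬ N i j) →
      (#((avoiding E F).filter (E i)) : ℝ) ≤ p * #(avoiding E F))
    {F : Finset ι} (hFU : F ⊆ U)
    (ih : ∀ G ⊂ F, ∀ i ∈ U, (#((avoiding E G).filter (E i)) : ℝ) ≤ x * #(avoiding E G))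
    {i : ι} (hi : i ∈ U) :
    (#((avoiding E F).filter (E i)) : ℝ) ≤ x * #(avoiding E F) := by
  set Fn := F.filter (N i)
  set Fi := F.filter (¬ N i ·)
  have hchain : (1 - x) ^ #Fn * #(avoiding E Fi) ≤ #(avoiding E (Fi ∪ Fn)) := by
    refine one_sub_pow_mul_card_avoiding_le hx1 fun H hH j hj hjH => ih _ ?_ j ?_
    · refine (ssubset_iff_of_subset (union_subset (filter_subset _ _)
        (hH.trans (filter_subset _ _)))).2 ⟨j, (mem_filter.1 hj).1, ?_⟩
      simp only [mem_union, mem_filter, not_or, not_and, not_not]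
      exact ⟨fun _ => (mem_filter.1 hj).2, hjH⟩
    · exact hFU (mem_filter.1 hj).1
  rw [union_comm, filter_union_filter_not_eq] at hchain
  have hFn : #Fn ≤ d := (card_le_card (filter_subset_filter _ hFU)).trans (hdeg i hi)
  calc (#((avoiding E F).filter (E i)) : ℝ) ≤ #((avoiding E Fi).filter (E i)) := by
        exact_mod_cast card_le_card (filter_subset_filter _ (avoiding_anti (filter_subset _ _)))
    _ ≤ p * #(avoiding E Fi) :=
        hlop i hi Fi ((filter_subset _ _).trans hFU) fun j hj => (mem_filter.1 hj).2
    _ ≤ x * (1 - x) ^ #Fn * #(avoiding E Fi) := by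
        gcongr
        exact hpx.trans (mul_le_mul_of_nonneg_left
          (pow_le_pow_of_le_one (by linarith) (by linarith) hFn) hx0)
    _ ≤ x * #(avoiding E F) := by rw [mul_assoc]; gcongr

lemma card_avoiding_pos_of_ssubset [Nonempty Ω] (hx1 : x < 1) {F : Finset ι} (hFU : F ⊆ U)
    (ih : ∀ G ⊂ F, 0 < #(avoiding E G) ∧
      ∀ i ∈ U, (#((avoiding E G).filter (E i)) : ℝ) ≤ x * #(avoiding E G)) :
    0 < #(avoiding E F) := by
  rcases F.eq_empty_or_nonempty with rfl | ⟨i, hi⟩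
  · simpa using Fintype.card_pos
  obtain ⟨hpos, hbound⟩ := ih (F.erase i) (erase_ssubset hi)
  have h := one_sub_mul_card_avoiding_le (hbound i (hFU hi))
  rw [insert_erase hi] at h
  have hpos' : (0 : ℝ) < #(avoiding E (F.erase i)) := by exact_mod_cast hpos
  exact_mod_cast (mul_pos (sub_pos.2 hx1) hpos').trans_le h

theorem avoiding_nonempty_of_lopsided [Nonempty Ω] (hx0 : 0 ≤ x) (hx1 : x < 1)
    (hpx : p ≤ x * (1 - x) ^ d) (hdeg : ∀ i ∈ U, #(U.filter (N i)) ≤ d)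
    (hlop : ∀ i ∈ U, ∀ F ⊆ U, (∀ j ∈ F, ¬ N i j) →
      (#((avoiding E F).filter (E i)) : ℝ) ≤ p * #(avoiding E F)) :
    (avoiding E U).Nonempty := by
  have key : ∀ F ⊆ U, 0 < #(avoiding E F) ∧
      ∀ i ∈ U, (#((avoiding E F).filter (E i)) : ℝ) ≤ x * #(avoiding E F) := by
    intro F
    induction F using Finset.strongInduction with
    | H F ih =>
      intro hFU
      have ih' G (hG : G ⊂ F) := ih G hG (hG.subset.trans hFU)
      exact ⟨card_avoiding_pos_of_ssubset hx1 hFU ih', fun i hi =>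
        card_avoiding_filter_le_of_ssubset hx0 hx1.le hpx hdeg hlop hFU
          (fun G hG => (ih' G hG).2) hi⟩
  exact card_pos.1 (key U subset_rfl).1

theorem avoiding_nonempty_of_symmetric [Nonempty Ω] (hp : 0 ≤ p)
    (hpd : exp 1 * p * (d + 1) < 1) (hdeg : ∀ i ∈ U, #(U.filter (N i)) ≤ d)
    (hlop : ∀ i ∈ U, ∀ F ⊆ U, (∀ j ∈ F, ¬ N i j) →
      (#((avoiding E F).filter (E i)) : ℝ) ≤ p * #(avoiding E F)) :
    (avoiding E U).Nonempty := by
  have hx1 : exp 1 * p < 1 := by nlinarith [exp_pos 1]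
  -- with `x = e p` the requirement `p ≤ x (1 - x) ^ d` becomes `e⁻¹ ≤ (1 - x) ^ d`
  refine avoiding_nonempty_of_lopsided (x := exp 1 * p) (by positivity) hx1 ?_ hdeg hlop
  calc p = exp 1 * p * exp (-1) := by rw [mul_right_comm, ← exp_add]; simp
    _ ≤ exp 1 * p * (1 - exp 1 * p) ^ d := by
        gcongr
        exact exp_neg_one_le_one_sub_pow hx1 (by linarith)

end LocalLemma

namespace LatinTransversal

open LocalLemma Equiv Fintype

variable {α : Type*}

def Covers (e : (α × α) × (α × α)) (σ : Perm α) : Prop :=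
  σ e.1.1 = e.1.2 ∧ σ e.2.1 = e.2.2

instance [DecidableEq α] (e : (α × α) × (α × α)) : DecidablePred (Covers e) :=
  fun _ => instDecidableAnd

def OnLineOf (e : (α × α) × (α × α)) (c : α × α) : Prop :=
  c.1 = e.1.1 ∨ c.1 = e.2.1 ∨ c.2 = e.1.2 ∨ c.2 = e.2.2

def SharesLine (e f : (α × α) × (α × α)) : Prop :=
  OnLineOf e f.1 ∨ OnLineOf e f.2

instance [DecidableEq α] (e : (α × α) × (α × α)) : DecidablePred (OnLineOf e) := by
  unfold OnLineOf; infer_instance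

instance [DecidableEq α] : DecidableRel (SharesLine (α := α)) := by
  unfold SharesLine; infer_instance

lemma exists_perm_apply_eq_apply_eq [DecidableEq α] {j j' u v : α} (hj : j ≠ j') (huv : u ≠ v) :
    ∃ c : Perm α, c j = u ∧ c j' = v ∧ ∀ y, y ≠ j → y ≠ j' → c y ≠ j → c y ≠ j' → c y = y := by
  refine ⟨swap j u * swap j' (swap j u v), ?_, ?_, ?_⟩ <;>
    simp only [Perm.mul_apply, swap_apply_def] <;> grind

lemma exp_one_mul_inv_card_offDiag_mul_lt_one [Fintype α] {k : ℕ} (hk : 1 ≤ k)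
    (hkn : (k : ℝ) ≤ (card α - 1) / (4 * exp 1)) :
    exp 1 * (#(univ : Finset α).offDiag : ℝ)⁻¹ * ((4 * card α * (k - 1) : ℕ) + 1) < 1 := by
  have he := exp_pos 1
  rw [le_div_iff₀ (by positivity)] at hkn
  have hk' : (1 : ℝ) ≤ k := by exact_mod_cast hk
  have hn : (1 : ℝ) ≤ card α := by nlinarith [add_one_le_exp 1]
  rw [offDiag_card, card_univ]
  push_cast [Nat.cast_sub hk, Nat.cast_sub (Nat.le_mul_self (card α))]
  rw [mul_right_comm, ← div_eq_mul_inv, div_lt_one (by nlinarith [add_one_le_exp 1])]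
  nlinarith [mul_le_mul_of_nonneg_left hkn (by linarith : (0 : ℝ) ≤ card α)]

section

variable [Fintype α] [DecidableEq α]

lemma card_filter_onLineOf_le (e : (α × α) × (α × α)) :
    #(univ.filter (OnLineOf e)) ≤ 4 * card α := by
  have hsub : univ.filter (OnLineOf e) ⊆
      ({e.1.1} ×ˢ univ ∪ {e.2.1} ×ˢ univ) ∪ (univ ×ˢ {e.1.2} ∪ univ ×ˢ {e.2.2}) := by
    intro c
    simp only [mem_filter, mem_union, mem_product, mem_singleton, mem_univ, true_and, and_true,
      OnLineOf]
    tauto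
  calc _ ≤ _ := card_le_card hsub
    _ ≤ _ := (card_union_le _ _).trans (add_le_add (card_union_le _ _) (card_union_le _ _))
    _ = 4 * card α := by simp; ring

lemma card_filter_covers_le {i i' j j' u v : α} (hj : j ≠ j') (huv : u ≠ v)
    {F : Finset ((α × α) × (α × α))} (hF : ∀ f ∈ F, ¬ SharesLine ((i, j), (i', j')) f) :
    #((avoiding Covers F).filter (Covers ((i, j), (i', j')))) ≤
      #((avoiding Covers F).filter (Covers ((i, u), (i', v)))) := by
  obtain ⟨c, hcj, hcj', hc⟩ := exists_perm_apply_eq_apply_eq hj huv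
  -- Off rows `i, i'` the permutation `σ` avoids columns `j, j'`, so `c * σ` passes through a cell
  -- off the lines of `(i, j), (i', j')` only if `σ` does; hence `c * σ` still avoids `F`.
  refine card_le_card_of_injOn (c * ·) (fun σ hσ => ?_) (mul_right_injective c).injOn
  simp only [mem_coe, mem_filter, mem_avoiding, Covers] at hσ ⊢
  obtain ⟨hσF, hσi, hσi'⟩ := hσ
  have hfix : ∀ a b, a ≠ i → a ≠ i' → b ≠ j → b ≠ j' → c (σ a) = b → σ a = b :=
    fun a b hai hai' hbj hbj' hab => by
      rw [← hab]
      refine (hc (σ a) ?_ ?_ (hab ▸ hbj) (hab ▸ hbj')).symm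
      · exact fun h => hai (σ.injective (h.trans hσi.symm))
      · exact fun h => hai' (σ.injective (h.trans hσi'.symm))
  refine ⟨fun f hf ⟨h1, h2⟩ => hσF f hf ⟨?_, ?_⟩, by simp [hσi, hcj], by simp [hσi', hcj']⟩
  all_goals
    have := hF f hf
    simp only [SharesLine, OnLineOf, not_or] at this
    simp only [Perm.mul_apply] at h1 h2
    grind

lemma card_filter_covers_le_inv_mul {e : (α × α) × (α × α)} (he₁ : e.1.1 ≠ e.2.1)
    (he₂ : e.1.2 ≠ e.2.2) {F : Finset ((α × α) × (α × α))} (hF : ∀ f ∈ F, ¬ SharesLine e f) :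
    (#((avoiding Covers F).filter (Covers e)) : ℝ) ≤
      (#(univ : Finset α).offDiag : ℝ)⁻¹ * #(avoiding Covers F) := by
  obtain ⟨⟨i, j⟩, i', j'⟩ := e
  have hmaps : ∀ σ ∈ avoiding Covers F, (σ i, σ i') ∈ (univ : Finset α).offDiag := fun σ _ => by
    simpa using σ.injective.ne he₁
  have hcount : #(univ : Finset α).offDiag *
      #((avoiding Covers F).filter (Covers ((i, j), (i', j')))) ≤ #(avoiding Covers F) :=
    calc _ = ∑ z ∈ (univ : Finset α).offDiag,
          #((avoiding Covers F).filter (Covers ((i, j), (i', j')))) := by simp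
      _ ≤ ∑ z ∈ (univ : Finset α).offDiag,
          #((avoiding Covers F).filter fun σ => (σ i, σ i') = z) := by
        refine sum_le_sum fun z hz =>
          (card_filter_covers_le he₂ (mem_offDiag.1 hz).2.2 hF).trans_eq ?_
        exact congrArg card (filter_congr fun σ _ => by simp [Covers, Prod.ext_iff])
      _ = #(avoiding Covers F) := (card_eq_sum_card_fiberwise hmaps).symm
  have hpos : (0 : ℝ) < #(univ : Finset α).offDiag := by
    exact_mod_cast card_pos.2 ⟨(i, i'), by simpa using he₁⟩
  rw [inv_mul_eq_div, le_div_iff₀ hpos, mul_comm]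
  exact_mod_cast hcount

end

section

variable [Fintype α] [LinearOrder α] {S : Type*} [DecidableEq S] (A : α → α → S)

def symbolCells (s : S) : Finset (α × α) := {c | A c.1 c.2 = s}

-- Rows are ordered so that each conflicting pair of cells appears once.
def conflicts : Finset ((α × α) × (α × α)) :=
  {f | f.1.1 < f.2.1 ∧ f.1.2 ≠ f.2.2 ∧ A f.1.1 f.1.2 = A f.2.1 f.2.2}

lemma card_filter_sharesLine_le {k : ℕ} (hk : ∀ s, #(symbolCells A s) ≤ k)
    (e : (α × α) × (α × α)) :
    #((conflicts A).filter (SharesLine e)) ≤ 4 * card α * (k - 1) := by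
  set L := univ.filter (OnLineOf e)
  let orient (f : (α × α) × (α × α)) := if OnLineOf e f.1 then f else f.swap
  have hmaps : ∀ f ∈ (conflicts A).filter (SharesLine e),
      orient f ∈ L.biUnion fun a => ((symbolCells A (A a.1 a.2)).erase a).image (a, ·) := by
    intro f hf
    simp only [mem_filter, conflicts, SharesLine, mem_univ, true_and] at hf
    by_cases h : OnLineOf e f.1 <;>
      simp [orient, h, L, symbolCells, hf.2.resolve_left, Prod.ext_iff] <;> grind
  have hinj : Set.InjOn orient ((conflicts A).filter (SharesLine e)) := by
    intro f hf g hg hfg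
    simp only [mem_coe, conflicts, mem_filter, mem_univ, true_and] at hf hg
    by_cases hf1 : OnLineOf e f.1 <;> by_cases hg1 : OnLineOf e g.1 <;>
      simp [orient, hf1, hg1, Prod.ext_iff] at hfg <;> grind
  calc _ ≤ _ := card_le_card_of_injOn orient hmaps hinj
    _ ≤ ∑ a ∈ L, #(((symbolCells A (A a.1 a.2)).erase a).image (a, ·)) := card_biUnion_le
    _ ≤ ∑ _a ∈ L, (k - 1) := sum_le_sum fun a _ => card_image_le.trans <| by
        rw [card_erase_of_mem (by simp [symbolCells])]
        exact Nat.sub_le_sub_right (hk _) 1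
    _ ≤ 4 * card α * (k - 1) := by
        rw [sum_const, smul_eq_mul]
        exact Nat.mul_le_mul_right _ (card_filter_onLineOf_le e)

lemma injective_of_mem_avoiding_conflicts {σ : Perm α}
    (hσ : σ ∈ avoiding Covers (conflicts A)) : Function.Injective fun i => A i (σ i) := by
  intro a b hab
  by_contra hne
  wlog hlt : a < b generalizing a b
  · exact this hab.symm (Ne.symm hne) ((not_lt.1 hlt).lt_of_ne (Ne.symm hne))
  exact mem_avoiding.1 hσ ((a, σ a), (b, σ b))
    (by simp [conflicts, hlt, hab, σ.injective.ne hne]) ⟨rfl, rfl⟩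

theorem exists_injective_of_card_symbolCells_le
    (hA : ∀ s, (#(symbolCells A s) : ℝ) ≤ (card α - 1) / (4 * exp 1)) :
    ∃ σ : Perm α, Function.Injective fun i => A i (σ i) := by
  cases isEmpty_or_nonempty α
  · exact ⟨1, Function.injective_of_subsingleton _⟩
  obtain ⟨a⟩ := ‹Nonempty α›
  set k := ⌊((card α : ℝ) - 1) / (4 * exp 1)⌋₊
  have hk s : #(symbolCells A s) ≤ k := Nat.le_floor (hA s)
  have hk1 : 1 ≤ k := (card_pos.2 ⟨(a, a), by simp [symbolCells]⟩).trans_le (hk (A a a))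
  have hkn : (k : ℝ) ≤ (card α - 1) / (4 * exp 1) :=
    Nat.floor_le ((Nat.cast_nonneg _).trans (hA (A a a)))
  obtain ⟨σ, hσ⟩ := avoiding_nonempty_of_symmetric (N := SharesLine) (by positivity)
    (exp_one_mul_inv_card_offDiag_mul_lt_one hk1 hkn) (fun e _ => card_filter_sharesLine_le A hk e)
    fun e he F _ hF => by
      simp only [conflicts, mem_filter, mem_univ, true_and] at he
      exact card_filter_covers_le_inv_mul he.1.ne he.2.1 hF
  exact ⟨σ, injective_of_mem_avoiding_conflicts A hσ⟩

end

end LatinTransversal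

/-- Erdős–Spencer: every `n × n` matrix in which every symbol appears at most
`(n−1)/(4e)` times has a Latin transversal. -/
theorem stmt_16 (n : ℕ) {S : Type*} (A : Fin n → Fin n → S)
    (h : ∀ s : S,
      (({p : Fin n × Fin n | A p.1 p.2 = s}).ncard : ℝ)
        ≤ ((n : ℝ) - 1) / (4 * Real.exp 1)) :
    ∃ σ : Equiv.Perm (Fin n), Function.Injective fun i => A i (σ i) := by
  classical
  refine LatinTransversal.exists_injective_of_card_symbolCells_le A fun s => ?_
  have hcells : {p : Fin n × Fin n | A p.1 p.2 = s} = LatinTransversal.symbolCells A s := by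
    ext; simp [LatinTransversal.symbolCells]
  simpa [hcells] using h s
end

section
/- Lopsided Lovász Local Lemma: let A_1,...,A_m be events and H a graph on {1,...,m} such that for each i and each S ⊆ {j : ij ∉ E(H), j ≠ i}, P(A_i | ∩_{j∈S} complement(A_j)) ≤ P(A_i). If there exist x_1,...,x_m ∈ (0,1) with P(A_i) ≤ x_i ∏_{ij∈E(H)} (1 − x_j) for each i, then P(∩_{j=1}^m complement(A_j)) ≥ ∏_{j=1}^m (1 − x_j) > 0. -/
open MeasureTheory ProbabilityTheory

/-- Lopsided Lovász Local Lemma: if `H` is a lopsidependency graph for events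
`A_1, …, A_m` (all conditioning events having positive probability) and there are
`x_i ∈ (0,1)` with `P(A_i) ≤ x_i ∏_{ij ∈ E(H)} (1 − x_j)`, then
`P(∩ complement(A_j)) ≥ ∏ (1 − x_j) > 0`. -/
theorem stmt_17 {Ω : Type*} [MeasurableSpace Ω] (μ : Measure Ω)
    [IsProbabilityMeasure μ] {m : ℕ} (A : Fin m → Set Ω)
    (hA : ∀ i, MeasurableSet (A i)) (H : SimpleGraph (Fin m)) [DecidableRel H.Adj]
    (hpos : ∀ S : Finset (Fin m), 0 < μ (⋂ j ∈ S, (A j)ᶜ))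
    (hlop : ∀ i : Fin m, ∀ S : Finset (Fin m),
      (∀ j ∈ S, ¬ H.Adj i j ∧ j ≠ i) →
      (μ[|⋂ j ∈ S, (A j)ᶜ]) (A i) ≤ μ (A i))
    (x : Fin m → ℝ) (hx : ∀ i, 0 < x i ∧ x i < 1)
    (hineq : ∀ i, (μ (A i)).toReal ≤ x i * ∏ j ∈ H.neighborFinset i, (1 - x j)) :
    (∏ j : Fin m, (1 - x j)) ≤ (μ (⋂ j : Fin m, (A j)ᶜ)).toReal ∧
      0 < ∏ j : Fin m, (1 - x j) := by
  classical
  set C : Finset (Fin m) → Set Ω := fun S => ⋂ j ∈ S, (A j)ᶜ with hCdef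
  have hCmeas : ∀ S, MeasurableSet (C S) := fun S =>
    MeasurableSet.biInter S.countable_toSet (fun j _ => (hA j).compl)
  have hPpos : ∀ S, 0 < (μ (C S)).toReal := fun S =>
    ENNReal.toReal_pos (hpos S).ne' (measure_ne_top μ _)
  have hq : ∀ (S : Finset (Fin m)) (i : Fin m),
      (μ[|C S] (A i)).toReal = (μ (C S ∩ A i)).toReal / (μ (C S)).toReal := by
    intro S i
    rw [cond_apply (hCmeas S) μ (A i), ENNReal.toReal_mul, ENNReal.toReal_inv]
    ring
  have hCins : ∀ (S : Finset (Fin m)) (i : Fin m), C (insert i S) = C S ∩ (A i)ᶜ := by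
    intro S i
    ext w
    simp only [hCdef, Set.mem_iInter, Set.mem_inter_iff, Finset.mem_insert, Set.mem_compl_iff]
    constructor
    · intro h; exact ⟨fun j hj => h j (Or.inr hj), h i (Or.inl rfl)⟩
    · rintro ⟨h1, h2⟩ j (rfl | hj)
      · exact h2
      · exact h1 j hj
  have hsplit : ∀ (S : Finset (Fin m)) (i : Fin m),
      (μ (C (insert i S))).toReal = (μ (C S)).toReal - (μ (C S ∩ A i)).toReal := by
    intro S i
    have h0 : μ (C S ∩ A i) + μ (C S \ A i) = μ (C S) :=
      measure_inter_add_diff (C S) (hA i)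
    have h1 : C S \ A i = C (insert i S) := by rw [hCins, Set.diff_eq]
    rw [h1] at h0
    have := congrArg ENNReal.toReal h0
    rw [ENNReal.toReal_add (measure_ne_top μ _) (measure_ne_top μ _)] at this
    linarith
  -- base bound
  have hprodle1 : ∀ T : Finset (Fin m), ∏ j ∈ T, (1 - x j) ≤ 1 := by
    intro T
    exact Finset.prod_le_one (fun j _ => by linarith [(hx j).2]) (fun j _ => by linarith [(hx j).1])
  have hprodpos : ∀ T : Finset (Fin m), 0 < ∏ j ∈ T, (1 - x j) := by
    intro T
    exact Finset.prod_pos (fun j _ => by linarith [(hx j).2])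
  have hbase : ∀ (i : Fin m) (S : Finset (Fin m)), (∀ j ∈ S, ¬ H.Adj i j ∧ j ≠ i) →
      (μ[|C S] (A i)).toReal ≤ x i := by
    intro i S hS
    have h1 : (μ[|C S] (A i)).toReal ≤ (μ (A i)).toReal :=
      ENNReal.toReal_mono (measure_ne_top μ _) (hlop i S hS)
    have h2 := hineq i
    have h3 : x i * ∏ j ∈ H.neighborFinset i, (1 - x j) ≤ x i * 1 := by
      apply mul_le_mul_of_nonneg_left (hprodle1 _) (hx i).1.le
    linarith
  -- key lemma
  have key : ∀ n : ℕ, ∀ S : Finset (Fin m), S.card ≤ n → ∀ i, i ∉ S →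
      (μ[|C S] (A i)).toReal ≤ x i := by
    intro n
    induction n with
    | zero =>
      intro S hcard i hi
      have : S = ∅ := Finset.card_eq_zero.mp (Nat.le_zero.mp hcard)
      subst this
      exact hbase i ∅ (by simp)
    | succ n ih =>
      intro S hcard i hi
      set S₁ : Finset (Fin m) := S.filter (fun j => H.Adj i j) with hS₁def
      set S₂ : Finset (Fin m) := S.filter (fun j => ¬ H.Adj i j) with hS₂def
      have hunion : S₂ ∪ S₁ = S := by
        rw [hS₂def, hS₁def, Finset.union_comm]
        exact Finset.filter_union_filter_not_eq _ S
      have hdisj : Disjoint S₂ S₁ := by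
        rw [hS₂def, hS₁def]
        exact (Finset.disjoint_filter_filter_not S S _).symm
      have hcards : S₂.card + S₁.card = S.card := by
        rw [← Finset.card_union_of_disjoint hdisj, hunion]
      -- chain lemma
      have chain : ∀ T : Finset (Fin m), T ⊆ S₁ →
          (∏ j ∈ T, (1 - x j)) * (μ (C S₂)).toReal ≤ (μ (C (S₂ ∪ T))).toReal := by
        intro T
        induction T using Finset.induction_on with
        | empty => intro _; simp
        | @insert j T hj ihT =>
          intro hsub
          have hjS₁ : j ∈ S₁ := hsub (Finset.mem_insert_self j T)
          have hTsub : T ⊆ S₁ := fun a ha => hsub (Finset.mem_insert_of_mem ha)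
          have hjnot : j ∉ S₂ ∪ T := by
            intro hmem
            rcases Finset.mem_union.mp hmem with h | h
            · exact (Finset.mem_filter.mp h).2 (Finset.mem_filter.mp hjS₁).2
            · exact hj h
          have hcard2 : (S₂ ∪ T).card ≤ n := by
            have h1 : T.card + 1 ≤ S₁.card := by
              rw [← Finset.card_insert_of_notMem hj]
              exact Finset.card_le_card hsub
            have h2 : (S₂ ∪ T).card ≤ S₂.card + T.card := Finset.card_union_le _ _
            omega
          have hk := ih (S₂ ∪ T) hcard2 j hjnot
          rw [hq] at hk
          have hP := hPpos (S₂ ∪ T)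
          have hnum : (μ ((C (S₂ ∪ T)) ∩ A j)).toReal ≤ x j * (μ (C (S₂ ∪ T))).toReal := by
            rw [div_le_iff₀ hP] at hk
            linarith
          have heq : S₂ ∪ insert j T = insert j (S₂ ∪ T) := by
            ext a; simp only [Finset.mem_insert, Finset.mem_union]; tauto
          rw [heq, hsplit]
          have hstep : (1 - x j) * (μ (C (S₂ ∪ T))).toReal ≤
              (μ (C (S₂ ∪ T))).toReal - (μ (C (S₂ ∪ T) ∩ A j)).toReal := by linarith
          calc (∏ k ∈ insert j T, (1 - x k)) * (μ (C S₂)).toReal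
              = (1 - x j) * ((∏ k ∈ T, (1 - x k)) * (μ (C S₂)).toReal) := by
                rw [Finset.prod_insert hj]; ring
            _ ≤ (1 - x j) * (μ (C (S₂ ∪ T))).toReal :=
                mul_le_mul_of_nonneg_left (ihT hTsub) (by linarith [(hx j).2])
            _ ≤ _ := hstep
      -- main bound
      have hS₂cond : ∀ j ∈ S₂, ¬ H.Adj i j ∧ j ≠ i := by
        intro j hjmem
        refine ⟨(Finset.mem_filter.mp hjmem).2, ?_⟩
        intro hji; subst hji
        exact hi (Finset.mem_filter.mp hjmem).1
      have hlop2 : (μ (C S₂ ∩ A i)).toReal ≤ (μ (A i)).toReal * (μ (C S₂)).toReal := by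
        have h1 := hbase i S₂ hS₂cond
        have h2 : (μ[|C S₂] (A i)).toReal ≤ (μ (A i)).toReal :=
          ENNReal.toReal_mono (measure_ne_top μ _) (hlop i S₂ hS₂cond)
        rw [hq, div_le_iff₀ (hPpos S₂)] at h2
        linarith
      have hS₁sub : S₁ ⊆ H.neighborFinset i := by
        intro j hjmem
        exact (H.mem_neighborFinset i j).mpr (Finset.mem_filter.mp hjmem).2
      have hprodN : ∏ j ∈ H.neighborFinset i, (1 - x j) ≤ ∏ j ∈ S₁, (1 - x j) := by
        rw [← Finset.prod_sdiff hS₁sub]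
        have := hprodle1 (H.neighborFinset i \ S₁)
        nlinarith [hprodpos S₁, hprodpos (H.neighborFinset i \ S₁)]
      have hnum2 : (μ (C S ∩ A i)).toReal ≤ (μ (C S₂ ∩ A i)).toReal := by
        apply ENNReal.toReal_mono (measure_ne_top μ _)
        apply measure_mono
        apply Set.inter_subset_inter_left
        rw [hCdef]
        exact Set.biInter_subset_biInter_left (fun a ha => (Finset.mem_filter.mp ha).1)
      have hdenom : (∏ j ∈ S₁, (1 - x j)) * (μ (C S₂)).toReal ≤ (μ (C S)).toReal := by
        have := chain S₁ (Finset.Subset.refl S₁)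
        rwa [hunion] at this
      rw [hq, div_le_iff₀ (hPpos S)]
      have h5 : (μ (A i)).toReal * (μ (C S₂)).toReal ≤
          x i * ((∏ j ∈ S₁, (1 - x j)) * (μ (C S₂)).toReal) := by
        have h6 : (μ (A i)).toReal ≤ x i * ∏ j ∈ S₁, (1 - x j) := by
          have := hineq i
          nlinarith [(hx i).1, hprodN]
        nlinarith [hPpos S₂]
      have h7 : x i * ((∏ j ∈ S₁, (1 - x j)) * (μ (C S₂)).toReal) ≤ x i * (μ (C S)).toReal :=
        mul_le_mul_of_nonneg_left hdenom (hx i).1.le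
      linarith
  -- final product bound
  have final : ∀ S : Finset (Fin m), ∏ j ∈ S, (1 - x j) ≤ (μ (C S)).toReal := by
    intro S
    induction S using Finset.induction_on with
    | empty => simp [hCdef]
    | @insert i S hi ihS =>
      have hk := key S.card S le_rfl i hi
      rw [hq, div_le_iff₀ (hPpos S)] at hk
      rw [hsplit S i, Finset.prod_insert hi]
      nlinarith [hPpos S, (hx i).2]
  constructor
  · have := final Finset.univ
    have heq : C Finset.univ = ⋂ j : Fin m, (A j)ᶜ := by
      rw [hCdef]; simp
    rw [heq] at this
    simpa using this
  · exact hprodpos Finset.univ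
end
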